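/- Let a > 1, set τ_a = a^a/(a−1)^{a−1}, let c ∈ ℂ⁴, and define ψ₀ : ℝ³ → ℂ⁴ by ψ₀(x) = exp( (a/(a−1))^a (1+|x|)^{1−a} ) c. Then for every x ∈ ℝ³ with x ≠ 0, −i Σ_{j=1}^3 α_j ∂_jψ₀(x) = τ_a (1+|x|)^{−a} · i (α·x̂) ψ₀(x); equivalently, ψ₀ solves the Euler–Lagrange equation −iα·∇ψ₀ + τ_a (−i α·x̂) (1+|x|)^{−a} ((1+2S·L)ψ₀) = 0 on ℝ³∖{0}. -/

import Mathlib

open MeasureTheory Real ComplexConjugate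
open scoped InnerProductSpace

noncomputable section

abbrev R3 := EuclideanSpace ℝ (Fin 3)
abbrev C4 := EuclideanSpace ℂ (Fin 4)

/-- The Pauli matrices. -/
def pauli : Fin 3 → Matrix (Fin 2) (Fin 2) ℂ
  | 0 => !![0, 1; 1, 0]
  | 1 => !![0, -Complex.I; Complex.I, 0]
  | 2 => !![1, 0; 0, -1]

/-- Reindex a 2×2 block matrix as a 4×4 matrix. -/
def blocks4 (A B C D : Matrix (Fin 2) (Fin 2) ℂ) : Matrix (Fin 4) (Fin 4) ℂ :=
  Matrix.reindex finSumFinEquiv finSumFinEquiv (Matrix.fromBlocks A B C D)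

/-- The Dirac alpha matrices. -/
def diracAlpha (j : Fin 3) : Matrix (Fin 4) (Fin 4) ℂ :=
  blocks4 0 (pauli j) (pauli j) 0

/-- The Dirac beta matrix. -/
def diracBeta : Matrix (Fin 4) (Fin 4) ℂ :=
  blocks4 1 0 0 (-1)

/-- The spin matrices Sⱼ. -/
def spinS (j : Fin 3) : Matrix (Fin 4) (Fin 4) ℂ :=
  (1/2 : ℂ) • blocks4 (pauli j) 0 0 (pauli j)

/-- Action of a 4×4 complex matrix on ℂ⁴. -/
def act (M : Matrix (Fin 4) (Fin 4) ℂ) (v : C4) : C4 :=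
  WithLp.toLp 2 (M.mulVec v)

/-- Partial derivative of a ℂ⁴-valued function on ℝ³. -/
def pderiv3 (j : Fin 3) (ψ : R3 → C4) (x : R3) : C4 :=
  fderiv ℝ ψ x (EuclideanSpace.single j 1)

/-- The free Dirac operator with mass m. -/
def diracOp (m : ℝ) (ψ : R3 → C4) (x : R3) : C4 :=
  (-Complex.I) • ∑ j, act (diracAlpha j) (pderiv3 j ψ x) + (m : ℂ) • act diracBeta (ψ x)

/-- The massless Dirac operator `-iα·∇`. -/
def masslessDirac (ψ : R3 → C4) (x : R3) : C4 :=
  (-Complex.I) • ∑ j, act (diracAlpha j) (pderiv3 j ψ x)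

/-- The orbital angular momentum component Lⱼψ = −i (x × ∇ψ)ⱼ. -/
def orbL (j : Fin 3) (ψ : R3 → C4) (x : R3) : C4 :=
  (-Complex.I) • ((x (j + 1) : ℂ) • pderiv3 (j + 2) ψ x - (x (j + 2) : ℂ) • pderiv3 (j + 1) ψ x)

/-- The spin-orbit operator (1 + 2 S·L). -/
def spinOrbit (ψ : R3 → C4) (x : R3) : C4 :=
  ψ x + (2 : ℂ) • ∑ j, act (spinS j) (orbL j ψ x)

/-- The radial derivative of a scalar function on ℝ³. -/
def radialDeriv (f : R3 → ℝ) (x : R3) : ℝ :=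
  ∑ j, (x j / ‖x‖) * fderiv ℝ f x (EuclideanSpace.single j 1)

/-- The radial derivative of a ℂ⁴-valued function on ℝ³. -/
def radialDerivV (ψ : R3 → C4) (x : R3) : C4 :=
  ∑ j, ((x j / ‖x‖ : ℝ) : ℂ) • pderiv3 j ψ x

/-- α·x̂, the Dirac matrix contracted with the unit radial vector. -/
def alphaHat (x : R3) : Matrix (Fin 4) (Fin 4) ℂ :=
  ∑ j, ((x j / ‖x‖ : ℝ) : ℂ) • diracAlpha j

/-- A function on ℝ³ is radial if it depends only on the norm of its argument. -/
def IsRadial {E : Type*} (f : R3 → E) : Prop :=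
  ∀ x y : R3, ‖x‖ = ‖y‖ → f x = f y

/-!
Write `ψ₀ y = f ‖y‖ • c` with `f t = exp (K (1 + t) ^ (1 - a))` and `K = (a / (a - 1)) ^ a`.
For a radial profile times a constant spinor, `∂ⱼψ = f' ‖x‖ x̂ⱼ c`: hence `-iα·∇ψ = -i f' (α·x̂) c`,
and every component of `x × ∇ψ` is `f' (xₖ xₗ - xₗ xₖ)/‖x‖ c = 0`, so `(1 + 2S·L)ψ = ψ`.
The chain rule gives `f' = K (1 - a) (1 + t) ^ (-a) f`, and `K (1 - a) = -τ_a`.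
-/

lemma hasFDerivAt_norm {F : Type*} [NormedAddCommGroup F] [InnerProductSpace ℝ F] {x : F}
    (hx : x ≠ 0) : HasFDerivAt (fun y : F => ‖y‖) (‖x‖⁻¹ • innerSL ℝ x) x := by
  have hsq : HasFDerivAt (fun y : F => ‖y‖ ^ 2) ((2 : ℝ) • innerSL ℝ x) x :=
    (hasStrictFDerivAt_norm_sq x).hasFDerivAt.congr_fderiv (by ext; simp)
  have hsqrt := hsq.sqrt (by positivity)
  simp only [Real.sqrt_sq (norm_nonneg _)] at hsqrt
  refine hsqrt.congr_fderiv ?_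
  rw [smul_smul]
  field_simp

lemma act_smul (M : Matrix (Fin 4) (Fin 4) ℂ) (s : ℂ) (v : C4) :
    act M (s • v) = s • act M v := by
  simp only [act, WithLp.ofLp_smul, Matrix.mulVec_smul, WithLp.toLp_smul]

lemma act_sum_smul {ι : Type*} (s : Finset ι) (g : ι → ℂ) (M : ι → Matrix (Fin 4) (Fin 4) ℂ)
    (v : C4) : act (∑ j ∈ s, g j • M j) v = ∑ j ∈ s, g j • act (M j) v := by
  simp only [act, Matrix.sum_mulVec, Matrix.smul_mulVec, WithLp.toLp_sum, WithLp.toLp_smul]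

section RadialSpinor

variable {g : ℝ → ℝ} {g' : ℝ} {x : R3} (c : C4)

lemma pderiv3_radial_smul (hg : HasDerivAt g g' ‖x‖) (hx : x ≠ 0) (j : Fin 3) :
    pderiv3 j (fun y => (g ‖y‖ : ℂ) • c) x = ((g' * (x j / ‖x‖) : ℝ) : ℂ) • c := by
  have hψ : HasFDerivAt (fun y : R3 => g ‖y‖ • c) ((g' • ‖x‖⁻¹ • innerSL ℝ x).smulRight c) x :=
    (hg.comp_hasFDerivAt x (hasFDerivAt_norm hx)).smul_const c
  simp only [← Complex.coe_smul] at hψ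
  rw [pderiv3, hψ.fderiv, ContinuousLinearMap.smulRight_apply, Complex.coe_smul]
  congr 1
  simp [EuclideanSpace.inner_single_right, div_eq_inv_mul]

lemma masslessDirac_radial_smul (hg : HasDerivAt g g' ‖x‖) (hx : x ≠ 0) :
    masslessDirac (fun y => (g ‖y‖ : ℂ) • c) x = (-Complex.I * g') • act (alphaHat x) c := by
  simp only [masslessDirac, alphaHat, pderiv3_radial_smul c hg hx, act_smul, act_sum_smul,
    Finset.smul_sum, smul_smul]
  refine Finset.sum_congr rfl fun j _ => ?_
  push_cast
  ring_nf

lemma orbL_radial_smul (hg : HasDerivAt g g' ‖x‖) (hx : x ≠ 0) (j : Fin 3) :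
    orbL j (fun y => (g ‖y‖ : ℂ) • c) x = 0 := by
  simp only [orbL, pderiv3_radial_smul c hg hx, smul_smul]
  push_cast
  ring_nf
  rw [sub_self, smul_zero]

lemma spinOrbit_radial_smul (hg : HasDerivAt g g' ‖x‖) (hx : x ≠ 0) :
    spinOrbit (fun y => (g ‖y‖ : ℂ) • c) x = (g ‖x‖ : ℂ) • c := by
  simp only [spinOrbit, orbL_radial_smul c hg hx]
  simp [act]

end RadialSpinor

lemma div_sub_one_rpow_mul_one_sub {a : ℝ} (ha : 1 < a) :
    (a / (a - 1)) ^ a * (1 - a) = -(a ^ a / (a - 1) ^ (a - 1)) := by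
  have ha1 : 0 < a - 1 := by linarith
  have hsplit : (a - 1) ^ a = (a - 1) ^ (a - 1) * (a - 1) := by
    simpa using Real.rpow_add ha1 (a - 1) 1
  rw [Real.div_rpow (by linarith) ha1.le, hsplit]
  field_simp [(Real.rpow_pos_of_pos ha1 (a - 1)).ne']
  ring

lemma hasDerivAt_exp_mul_one_add_rpow (K b : ℝ) {t : ℝ} (ht : -1 < t) :
    HasDerivAt (fun s => exp (K * (1 + s) ^ b))
      (K * b * (1 + t) ^ (b - 1) * exp (K * (1 + t) ^ b)) t := by
  have hpow : HasDerivAt (fun s => (1 + s) ^ b) (1 * b * (1 + t) ^ (b - 1)) t :=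
    ((hasDerivAt_id t).const_add 1).rpow_const (Or.inl (by rw [id]; linarith))
  convert (hpow.const_mul K).exp using 1
  ring

/-- The polynomial-weight minimiser solves the Euler-Lagrange equation. -/
theorem euler_lagrange_polynomial (a : ℝ) (ha : 1 < a) (c : C4) (ψ₀ : R3 → C4)
    (hψ₀ : ∀ x : R3, ψ₀ x =
      (Real.exp ((a / (a - 1)) ^ a * (1 + ‖x‖) ^ (1 - a)) : ℂ) • c)
    (x : R3) (hx : x ≠ 0) :
    masslessDirac ψ₀ x =
        ((a ^ a / (a - 1) ^ (a - 1) * (1 + ‖x‖) ^ (-a) : ℝ) : ℂ) •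
          (Complex.I • act (alphaHat x) (ψ₀ x)) ∧
      masslessDirac ψ₀ x + ((a ^ a / (a - 1) ^ (a - 1) : ℝ) : ℂ) •
        ((-Complex.I) • act (alphaHat x)
          ((((1 + ‖x‖) ^ (-a) : ℝ) : ℂ) • spinOrbit ψ₀ x)) = 0 := by
  obtain rfl : ψ₀ = fun y => (exp ((a / (a - 1)) ^ a * (1 + ‖y‖) ^ (1 - a)) : ℂ) • c :=
    funext hψ₀
  have hg := hasDerivAt_exp_mul_one_add_rpow ((a / (a - 1)) ^ a) (1 - a)
    (by linarith [norm_nonneg x] : -1 < ‖x‖)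
  rw [mul_assoc, ← mul_assoc, div_sub_one_rpow_mul_one_sub ha, sub_sub_cancel_left] at hg
  have hD := masslessDirac_radial_smul c hg hx
  rw [spinOrbit_radial_smul c hg hx, hD]
  simp only [act_smul]
  constructor <;> push_cast <;> module
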